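/- Let (i₁,j₁),…,(i_l,j_l) be pairs of natural numbers with j_h < i_h for each h. Then for all coefficient sequences a, b: D(a (⋆_{i₁,j₁}⋯⋆_{i_l,j_l}) b) = a (⋆_{i₁+1,j₁+1}⋯⋆_{i_l+1,j_l+1}) (D b) + (D a) (⋆_{i₁+1,j₁}⋯⋆_{i_l+1,j_l}⋆_{1,0}) b. -/

import Mathlib

open Finset

/-- The ψ-factorial: ψₙ! = ψ₁ψ₂⋯ψₙ, with ψ₀! = 1. -/
noncomputable def psiFact (ψ : ℕ → ℂ) : ℕ → ℂ
  | 0 => 1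
  | n + 1 => psiFact ψ n * ψ (n + 1)

/-- The ψ-binomial coefficient binomψ(n,k) = ψₙ!/(ψₖ!·ψ_{n−k}!). -/
noncomputable def psiBinom (ψ : ℕ → ℂ) (n k : ℕ) : ℂ :=
  psiFact ψ n / (psiFact ψ k * psiFact ψ (n - k))

/-- The Fontané numbers F(n,k) = (ψₙ − ψₖ)/ψ_{n−k}. -/
noncomputable def Fker (ψ : ℕ → ℂ) (n k : ℕ) : ℂ :=
  (ψ n - ψ k) / ψ (n - k)

/-- The concatenated opposite Fontané product ⋆_{i₁,j₁}⋯⋆_{i_l,j_l} indexed by a list of pairs. -/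
noncomputable def oppFontaneL (ψ : ℕ → ℂ) (L : List (ℕ × ℕ)) (a b : ℕ → ℂ) (n : ℕ) : ℂ :=
  ∑ k ∈ Finset.range (n + 1),
    (L.map fun p => Fker ψ (n + p.1) (n - k + p.2)).prod * psiBinom ψ n k * a k * b (n - k)

/-- The ψ-derivative on coefficient sequences: the shift (D a)ₙ = a_{n+1}. -/
def Dpsi (a : ℕ → ℂ) (n : ℕ) : ℂ := a (n + 1)

/-! The ψ-binomials satisfy the Pascal-type rule
`binomψ(n+1, k+1) = F(n+1, n-k) binomψ(n, k) + binomψ(n, k+1)`, and moving from `n` to `n + 1`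
in a factor `F(n + i, n - k + j)` is the same as shifting the index pair `(i, j)`. Splitting each
term of `(a ⋆ b)ₙ₊₁` by the Pascal rule, the second summands reassemble into the product with
`D b`, and the first ones, whose extra factor `F(n+1, n-k)` is exactly the one contributed by
`⋆_{1,0}`, into the product with `D a`. At the boundary `k = n` this needs `F(n+1, 0) = 1`,
i.e. `ψ₀ = 0`. -/

section
variable (ψ : ℕ → ℂ)

lemma psiFact_succ (n : ℕ) : psiFact ψ (n + 1) = psiFact ψ n * ψ (n + 1) := rfl

lemma psiFact_ne_zero (hψ : ∀ n : ℕ, 1 ≤ n → ψ n ≠ 0) (n : ℕ) : psiFact ψ n ≠ 0 := by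
  induction n with
  | zero => simp [psiFact]
  | succ n ih => exact mul_ne_zero ih (hψ (n + 1) n.succ_pos)

lemma psiBinom_zero_right (hψ : ∀ n : ℕ, 1 ≤ n → ψ n ≠ 0) (n : ℕ) : psiBinom ψ n 0 = 1 := by
  simp [psiBinom, psiFact, psiFact_ne_zero ψ hψ n]

lemma psiBinom_self (hψ : ∀ n : ℕ, 1 ≤ n → ψ n ≠ 0) (n : ℕ) : psiBinom ψ n n = 1 := by
  simp [psiBinom, psiFact, psiFact_ne_zero ψ hψ n]

lemma Fker_zero_right (hψ0 : ψ 0 = 0) {n : ℕ} (hn : ψ n ≠ 0) : Fker ψ n 0 = 1 := by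
  simp [Fker, hψ0, hn]

lemma psiBinom_succ_succ (hψ : ∀ n : ℕ, 1 ≤ n → ψ n ≠ 0) {n k : ℕ} (hk : k < n) :
    psiBinom ψ (n + 1) (k + 1) = Fker ψ (n + 1) (n - k) * psiBinom ψ n k + psiBinom ψ n (k + 1) := by
  obtain ⟨m, rfl⟩ := Nat.exists_eq_add_of_lt hk
  simp only [psiBinom, Fker, show k + m + 1 - k = m + 1 by omega,
    show k + m + 1 + 1 - (k + 1) = m + 1 by omega,
    show k + m + 1 + 1 - (m + 1) = k + 1 by omega, show k + m + 1 - (k + 1) = m by omega,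
    psiFact_succ ψ (k + m + 1), psiFact_succ ψ k, psiFact_succ ψ m]
  have := psiFact_ne_zero ψ hψ
  field_simp [hψ (k + 1) k.succ_pos, hψ (m + 1) m.succ_pos]
  ring

lemma sum_mul_psiBinom_succ_succ (hψ0 : ψ 0 = 0) (hψ : ∀ n : ℕ, 1 ≤ n → ψ n ≠ 0)
    (T : ℕ → ℂ) (n : ℕ) :
    ∑ k ∈ range (n + 1), T k * psiBinom ψ (n + 1) (k + 1)
      = ∑ k ∈ range (n + 1), T k * Fker ψ (n + 1) (n - k) * psiBinom ψ n k
        + ∑ k ∈ range n, T k * psiBinom ψ n (k + 1) := by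
  have hlast : psiBinom ψ (n + 1) (n + 1) = Fker ψ (n + 1) (n - n) * psiBinom ψ n n := by
    rw [Nat.sub_self, Fker_zero_right ψ hψ0 (hψ _ n.succ_pos), psiBinom_self ψ hψ,
      psiBinom_self ψ hψ, one_mul]
  rw [sum_range_succ, sum_range_succ, hlast, ← mul_assoc, add_right_comm, ← sum_add_distrib]
  congr 1
  refine sum_congr rfl fun k hk => ?_
  rw [psiBinom_succ_succ ψ hψ (mem_range.mp hk)]
  ring

noncomputable def fontaneWeight (L : List (ℕ × ℕ)) (m r : ℕ) : ℂ :=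
  (L.map fun p => Fker ψ (m + p.1) (r + p.2)).prod

lemma oppFontaneL_eq_sum_fontaneWeight (L : List (ℕ × ℕ)) (a b : ℕ → ℂ) (n : ℕ) :
    oppFontaneL ψ L a b n
      = ∑ k ∈ range (n + 1), fontaneWeight ψ L n (n - k) * psiBinom ψ n k * a k * b (n - k) :=
  rfl

lemma fontaneWeight_map_succ_succ (L : List (ℕ × ℕ)) (m r : ℕ) :
    fontaneWeight ψ (L.map fun p => (p.1 + 1, p.2 + 1)) m r = fontaneWeight ψ L (m + 1) (r + 1) := by
  simp only [fontaneWeight, List.map_map, Function.comp_def, add_assoc, add_comm 1]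

lemma fontaneWeight_map_succ_fst_append (L : List (ℕ × ℕ)) (m r : ℕ) :
    fontaneWeight ψ ((L.map fun p => (p.1 + 1, p.2)) ++ [(1, 0)]) m r
      = fontaneWeight ψ L (m + 1) r * Fker ψ (m + 1) r := by
  simp only [fontaneWeight, List.map_append, List.map_map, Function.comp_def, List.prod_append,
    List.map_cons, List.map_nil, List.prod_cons, List.prod_nil, add_zero, mul_one, add_assoc, add_comm 1]

end

theorem Dpsi_oppFontaneL_general (ψ : ℕ → ℂ) (hψ0 : ψ 0 = 0) (hψ : ∀ n : ℕ, 1 ≤ n → ψ n ≠ 0)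
    (L : List (ℕ × ℕ)) (a b : ℕ → ℂ) (n : ℕ) :
    Dpsi (oppFontaneL ψ L a b) n
      = oppFontaneL ψ (L.map fun p => (p.1 + 1, p.2 + 1)) a (Dpsi b) n
        + oppFontaneL ψ ((L.map fun p => (p.1 + 1, p.2)) ++ [(1, 0)]) (Dpsi a) b n := by
  set W := fontaneWeight ψ L (n + 1)
  set T : ℕ → ℂ := fun k => W (n - k) * a (k + 1) * b (n - k)
  have hlhs : ∑ k ∈ range (n + 1 + 1), W (n + 1 - k) * psiBinom ψ (n + 1) k * a k * b (n + 1 - k)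
      = ∑ k ∈ range (n + 1), T k * psiBinom ψ (n + 1) (k + 1)
        + W (n + 1) * psiBinom ψ (n + 1) 0 * a 0 * b (n + 1) := by
    rw [sum_range_succ']
    simp only [T, Nat.add_sub_add_right, Nat.sub_zero]
    congr 1
    exact sum_congr rfl fun k _ => by ring
  have hDb : ∑ k ∈ range (n + 1), W (n - k + 1) * psiBinom ψ n k * a k * b (n - k + 1)
      = ∑ k ∈ range n, T k * psiBinom ψ n (k + 1) + W (n + 1) * psiBinom ψ n 0 * a 0 * b (n + 1) := by
    rw [sum_range_succ', Nat.sub_zero]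
    congr 1
    refine sum_congr rfl fun k hk => ?_
    rw [show n - (k + 1) + 1 = n - k by have := mem_range.mp hk; omega]
    ring
  have hDa : ∑ k ∈ range (n + 1), W (n - k) * Fker ψ (n + 1) (n - k) * psiBinom ψ n k * a (k + 1) * b (n - k)
      = ∑ k ∈ range (n + 1), T k * Fker ψ (n + 1) (n - k) * psiBinom ψ n k :=
    sum_congr rfl fun k _ => by ring
  simp only [Dpsi, oppFontaneL_eq_sum_fontaneWeight, fontaneWeight_map_succ_succ,
    fontaneWeight_map_succ_fst_append]
  rw [hlhs, hDb, hDa, sum_mul_psiBinom_succ_succ ψ hψ0 hψ, psiBinom_zero_right ψ hψ,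
    psiBinom_zero_right ψ hψ]
  ring

/-- Leibniz rule for the concatenated opposite Fontané products. -/
theorem Dpsi_oppFontaneL (ψ : ℕ → ℂ) (hψ0 : ψ 0 = 0) (hψ1 : ψ 1 = 1) (hψ : ∀ n : ℕ, 1 ≤ n → ψ n ≠ 0)
    (L : List (ℕ × ℕ)) (hL : ∀ p ∈ L, p.2 < p.1) (a b : ℕ → ℂ) (n : ℕ) :
    Dpsi (oppFontaneL ψ L a b) n
      = oppFontaneL ψ (L.map fun p => (p.1 + 1, p.2 + 1)) a (Dpsi b) n
        + oppFontaneL ψ ((L.map fun p => (p.1 + 1, p.2)) ++ [(1, 0)]) (Dpsi a) b n :=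
  Dpsi_oppFontaneL_general ψ hψ0 hψ L a b n
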